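/- For every finite simple graph G and every natural number k, there exists a connected finite simple graph H with Aut(H) isomorphic to Aut(G) and clique number ω(H) ≥ k. -/

import Mathlib

/-!
Start from a noncomplete graph `H` on at least three vertices with `Aut H ≅ Aut G`: `G` itself
when it qualifies; the star `K_{n,1}` when every permutation of the `n ≥ 2` vertices of `G` is an
automorphism (`G` complete, or `n = 2`); a fixed asymmetric graph on six vertices when `n ≤ 1`.

In `ext H` every vertex of `H` gets a new matching partner and the new vertices form a clique, so
`ext H` is connected with clique number at least `|H|`. If `H` is noncomplete and `|H| ≥ 3`, the
new vertices form the only clique of size `|H|`; hence every automorphism of `ext H` preserves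
them and is induced by an automorphism of `H`, and `ext H` is again noncomplete. Iterating
doubles the number of vertices until it exceeds `k`.
-/
open SimpleGraph

/-- Matching-plus-clique extension: old vertices `Sum.inl v`, new clique vertices `Sum.inr v`,
with `Sum.inr v` the matching partner of `Sum.inl v`. -/
def ext {V : Type*} (G : SimpleGraph V) : SimpleGraph (V ⊕ V) where
  Adj x y :=
    match x, y with
    | Sum.inl a, Sum.inl b => G.Adj a b
    | Sum.inr a, Sum.inr b => a ≠ b
    | Sum.inl a, Sum.inr b => a = b
    | Sum.inr a, Sum.inl b => a = b
  symm := by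
    constructor
    rintro (a | a) (b | b) h <;> simp_all
    · exact h.symm
    · exact fun e => h e.symm
  loopless := by
    constructor
    rintro (a | a) h <;> simp_all

instance {V : Type*} (G : SimpleGraph V) [DecidableEq V] [DecidableRel G.Adj] :
    DecidableRel (ext G).Adj
  | Sum.inl a, Sum.inl b => inferInstanceAs (Decidable (G.Adj a b))
  | Sum.inl a, Sum.inr b => inferInstanceAs (Decidable (a = b))
  | Sum.inr a, Sum.inl b => inferInstanceAs (Decidable (a = b))
  | Sum.inr a, Sum.inr b => inferInstanceAs (Decidable (a ≠ b))

instance {V : Type*} (G : SimpleGraph V) : Group (G ≃g G) where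
  mul a b := b.trans a
  one := SimpleGraph.Iso.refl
  inv := SimpleGraph.Iso.symm
  mul_assoc a b c := rfl
  one_mul a := rfl
  mul_one a := rfl
  inv_mul_cancel a := by
    have : a.trans a.symm = SimpleGraph.Iso.refl := by
      ext v
      exact a.toEquiv.symm_apply_apply v
    exact this

open scoped Finset

namespace SimpleGraph

theorem IsNClique.map_iso {α β : Type*} {G : SimpleGraph α} {H : SimpleGraph β} (φ : G ≃g H)
    {n : ℕ} {s : Finset α} (hs : G.IsNClique n s) :
    H.IsNClique n (s.map φ.toEquiv.toEmbedding) := by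
  refine ⟨?_, by simp [hs.card_eq]⟩
  rw [Finset.coe_map]
  rintro _ ⟨a, ha, rfl⟩ _ ⟨b, hb, rfl⟩ hab
  exact φ.map_adj_iff.2 (hs.isClique ha hb (ne_of_apply_ne _ hab))

end SimpleGraph

theorem exists_perm_apply_inl_eq_inl {α β : Type*} [Finite α] {f : α ⊕ β → α ⊕ β}
    (hf : f.Injective) (h : ∀ a, ∃ b, f (.inl a) = .inl b) :
    ∃ σ : Equiv.Perm α, ∀ a, f (.inl a) = .inl (σ a) := by
  choose g hg using h
  have hg_inj : g.Injective := fun a b hab => Sum.inl_injective (hf (by rw [hg, hg, hab]))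
  exact ⟨Equiv.ofBijective g (Finite.injective_iff_bijective.1 hg_inj), hg⟩

section Ext

variable {V : Type*} {G : SimpleGraph V}

@[simp] lemma ext_adj_inl_inl {a b : V} : (ext G).Adj (.inl a) (.inl b) ↔ G.Adj a b := Iff.rfl
@[simp] lemma ext_adj_inl_inr {a b : V} : (ext G).Adj (.inl a) (.inr b) ↔ a = b := Iff.rfl
@[simp] lemma ext_adj_inr_inl {a b : V} : (ext G).Adj (.inr a) (.inl b) ↔ a = b := Iff.rfl
@[simp] lemma ext_adj_inr_inr {a b : V} : (ext G).Adj (.inr a) (.inr b) ↔ a ≠ b := Iff.rfl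

lemma ext_ne_top (hG : G ≠ ⊤) : ext G ≠ ⊤ := by
  obtain ⟨a, b, hab, hnadj⟩ := ne_top_iff_exists_not_adj.1 hG
  exact ne_top_iff_exists_not_adj.2 ⟨.inl a, .inl b, by simpa using hab, hnadj⟩

lemma ext_connected [Nonempty V] : (ext G).Connected := by
  obtain ⟨v₀⟩ := ‹Nonempty V›
  have reach_inr (v : V) : (ext G).Reachable (.inr v) (.inr v₀) := by
    rcases eq_or_ne v v₀ with rfl | hv
    · rfl
    · exact Adj.reachable hv
  have reach : ∀ x, (ext G).Reachable x (.inr v₀)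
    | .inl v => (Adj.reachable (by simp)).trans (reach_inr v)
    | .inr v => reach_inr v
  exact (connected_iff _).2 ⟨fun x y => (reach x).trans (reach y).symm, ⟨.inr v₀⟩⟩

lemma isClique_toLeft_of_ext {S : Finset (V ⊕ V)} (hS : (ext G).IsClique (S : Set (V ⊕ V))) :
    G.IsClique (S.toLeft : Set V) := fun a ha b hb hab =>
  hS (Finset.mem_toLeft.1 ha) (Finset.mem_toLeft.1 hb) (by simpa using hab)

variable (G) in
def extAutHom : (G ≃g G) →* (ext G ≃g ext G) where
  toFun σ :=
    { toEquiv := Equiv.sumCongr σ.toEquiv σ.toEquiv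
      map_rel_iff' := by rintro (a | a) (b | b) <;> simp [σ.map_adj_iff] }
  map_one' := by ext (a | a) <;> rfl
  map_mul' _ _ := by ext (a | a) <;> rfl

@[simp] lemma extAutHom_apply_inl (σ : G ≃g G) (v : V) : extAutHom G σ (.inl v) = .inl (σ v) :=
  rfl

lemma extAutHom_injective : Function.Injective (extAutHom G) := fun σ τ h =>
  RelIso.ext fun v => by simpa using DFunLike.congr_fun h (.inl v)

section Fintype

variable [Fintype V]

lemma isNClique_ext_map_inr : (ext G).IsNClique (Fintype.card V) (Finset.univ.map .inr) := by
  refine ⟨?_, by simp⟩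
  rw [Finset.coe_map]
  rintro _ ⟨a, -, rfl⟩ _ ⟨b, -, rfl⟩ hab
  exact fun h => hab (congrArg _ h)

lemma card_le_cliqueNum_ext : Fintype.card V ≤ (ext G).cliqueNum := by
  simpa using (isNClique_ext_map_inr (G := G)).isClique.card_le_cliqueNum

lemma toLeft_eq_empty_of_isNClique_ext (hG : G ≠ ⊤) (h3 : 3 ≤ Fintype.card V)
    {S : Finset (V ⊕ V)} (hS : (ext G).IsNClique (Fintype.card V) S) : S.toLeft = ∅ := by
  have hcard := Finset.card_toLeft_add_card_toRight (u := S)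
  rw [hS.card_eq] at hcard
  by_contra hL
  obtain ⟨w, hw⟩ := Finset.nonempty_iff_ne_empty.2 hL
  rcases S.toRight.eq_empty_or_nonempty with hR | ⟨u, hu⟩
  · rw [hR, Finset.card_empty, add_zero] at hcard
    apply hG
    rw [← isClique_univ, ← Finset.coe_univ, ← Finset.eq_univ_of_card _ hcard]
    exact isClique_toLeft_of_ext hS.isClique
  · -- a clique meeting both sides is a single matching edge
    have hL : #S.toLeft ≤ 1 := Finset.card_le_one.2 fun a ha b hb =>
      (hS.isClique (Finset.mem_toLeft.1 ha) (Finset.mem_toRight.1 hu) Sum.inl_ne_inr :).trans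
        (hS.isClique (Finset.mem_toLeft.1 hb) (Finset.mem_toRight.1 hu) Sum.inl_ne_inr :).symm
    have hR : #S.toRight ≤ 1 := Finset.card_le_one.2 fun a ha b hb =>
      (hS.isClique (Finset.mem_toRight.1 ha) (Finset.mem_toLeft.1 hw) Sum.inr_ne_inl :).trans
        (hS.isClique (Finset.mem_toRight.1 hb) (Finset.mem_toLeft.1 hw) Sum.inr_ne_inl :).symm
    omega

variable (hG : G ≠ ⊤) (h3 : 3 ≤ Fintype.card V)
include hG h3

lemma exists_apply_inr_eq_inr (φ : ext G ≃g ext G) (v : V) : ∃ w, φ (.inr v) = .inr w := by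
  have hS := (isNClique_ext_map_inr (G := G)).map_iso φ
  have hmem : φ (.inr v) ∈ (Finset.univ.map .inr).map φ.toEquiv.toEmbedding :=
    Finset.mem_map_of_mem _ (Finset.mem_map_of_mem _ (Finset.mem_univ v))
  rcases h : φ (.inr v) with w | w
  · rw [h, ← Finset.mem_toLeft, toLeft_eq_empty_of_isNClique_ext hG h3 hS] at hmem
    exact absurd hmem (Finset.notMem_empty w)
  · exact ⟨w, rfl⟩

lemma exists_apply_inl_eq_inl (φ : ext G ≃g ext G) (v : V) : ∃ w, φ (.inl v) = .inl w := by
  rcases h : φ (.inl v) with w | w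
  · exact ⟨w, rfl⟩
  · obtain ⟨u, hu⟩ := exists_apply_inr_eq_inr hG h3 φ.symm w
    rw [← h, RelIso.symm_apply_apply] at hu
    exact absurd hu Sum.inl_ne_inr

lemma extAutHom_surjective : Function.Surjective (extAutHom G) := by
  intro φ
  obtain ⟨σ, hσ⟩ :=
    exists_perm_apply_inl_eq_inl φ.injective (exists_apply_inl_eq_inl hG h3 φ)
  have hσ_adj (a b : V) : G.Adj (σ a) (σ b) ↔ G.Adj a b := by
    simpa only [hσ, ext_adj_inl_inl] using φ.map_adj_iff (v := .inl a) (w := .inl b)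
  refine ⟨⟨σ, hσ_adj _ _⟩, ?_⟩
  ext (v | v)
  · exact (hσ v).symm
  · -- `φ (inr v)` is the matching partner of `φ (inl v) = inl (σ v)`
    obtain ⟨w, hw⟩ := exists_apply_inr_eq_inr hG h3 φ v
    have hadj : (ext G).Adj (φ (.inl v)) (φ (.inr v)) := φ.map_adj_iff.2 rfl
    rw [hσ, hw, ext_adj_inl_inr] at hadj
    rw [hw, ← hadj]
    rfl

noncomputable def extAutMulEquiv : (ext G ≃g ext G) ≃* (G ≃g G) :=
  (MulEquiv.ofBijective (extAutHom G) ⟨extAutHom_injective, extAutHom_surjective hG h3⟩).symm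

end Fintype

end Ext

section Star

variable (V : Type*)

def starAutHom :
    Equiv.Perm V →* (completeBipartiteGraph V Unit ≃g completeBipartiteGraph V Unit) where
  toFun σ :=
    { toEquiv := Equiv.sumCongr σ (Equiv.refl Unit)
      map_rel_iff' := by rintro (a | a) (b | b) <;> simp }
  map_one' := by ext (a | a) <;> rfl
  map_mul' _ _ := by ext (a | a) <;> rfl

variable {V}

@[simp] lemma starAutHom_apply_inl (σ : Equiv.Perm V) (v : V) :
    starAutHom V σ (.inl v) = .inl (σ v) :=
  rfl

variable [Fintype V]

lemma completeBipartiteGraph_ne_top (h2 : 2 ≤ Fintype.card V) :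
    completeBipartiteGraph V Unit ≠ ⊤ := by
  obtain ⟨a, b, hab⟩ := Fintype.exists_pair_of_one_lt_card h2
  exact ne_top_iff_exists_not_adj.2 ⟨.inl a, .inl b, by simpa using hab, by simp⟩

lemma completeBipartiteGraph_iso_apply_inr (h2 : 2 ≤ Fintype.card V)
    (φ : completeBipartiteGraph V Unit ≃g completeBipartiteGraph V Unit) :
    φ (.inr ()) = .inr () := by
  rcases h : φ (.inr ()) with a | u
  · -- all of `V` would be mapped into the neighbourhood `{inr ()}` of `inl a`
    obtain ⟨b, c, hbc⟩ := Fintype.exists_pair_of_one_lt_card h2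
    have hφ (v : V) : φ (.inl v) = .inr () := by
      have hadj : (completeBipartiteGraph V Unit).Adj (φ (.inl v)) (.inl a) :=
        h ▸ φ.map_adj_iff.2 (by simp)
      rcases hv : φ (.inl v) with w | u
      · simp [hv] at hadj
      · rfl
    exact absurd (φ.injective ((hφ b).trans (hφ c).symm)) (by simpa using hbc)
  · rfl

lemma starAutHom_bijective (h2 : 2 ≤ Fintype.card V) : Function.Bijective (starAutHom V) := by
  refine ⟨fun σ τ h => Equiv.ext fun v => by simpa using DFunLike.congr_fun h (.inl v), ?_⟩
  intro φ
  have hinr := completeBipartiteGraph_iso_apply_inr h2 φ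
  have hinl (v : V) : ∃ w, φ (.inl v) = .inl w := by
    rcases h : φ (.inl v) with w | u
    · exact ⟨w, rfl⟩
    · exact absurd (φ.injective (h.trans hinr.symm)) Sum.inl_ne_inr
  obtain ⟨σ, hσ⟩ := exists_perm_apply_inl_eq_inl φ.injective hinl
  refine ⟨σ, ?_⟩
  ext (v | u)
  · exact (hσ v).symm
  · exact hinr.symm

noncomputable def starAutMulEquiv (h2 : 2 ≤ Fintype.card V) :
    (completeBipartiteGraph V Unit ≃g completeBipartiteGraph V Unit) ≃* Equiv.Perm V :=
  (MulEquiv.ofBijective (starAutHom V) (starAutHom_bijective h2)).symm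

end Star

section PermAut

variable {V : Type*} {G : SimpleGraph V}

def autMulEquivPerm (h : ∀ (σ : Equiv.Perm V) (a b : V), G.Adj (σ a) (σ b) ↔ G.Adj a b) :
    (G ≃g G) ≃* Equiv.Perm V where
  toFun φ := φ.toEquiv
  invFun σ := ⟨σ, h σ _ _⟩
  left_inv _ := rfl
  right_inv _ := rfl
  map_mul' _ _ := rfl

lemma adj_perm_iff_of_card_le_two [Fintype V] (hV : Fintype.card V ≤ 2) (σ : Equiv.Perm V)
    (a b : V) : G.Adj (σ a) (σ b) ↔ G.Adj a b := by
  rcases eq_or_ne a b with rfl | hab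
  · simp
  have hcover (x : V) : x = a ∨ x = b := by
    classical
    have : ({a, b} : Finset V) = Finset.univ :=
      Finset.eq_univ_of_card _
        (le_antisymm (Finset.card_le_univ _) (hV.trans (Finset.card_pair hab).ge))
    simpa using this.ge (Finset.mem_univ x)
  have hσ : σ a ≠ σ b := σ.injective.ne hab
  rcases hcover (σ a) with h | h <;> rcases hcover (σ b) with h' | h' <;>
    simp_all [G.adj_comm]

instance [Subsingleton V] : Unique (G ≃g G) where
  default := 1
  uniq _ := RelIso.ext fun _ => Subsingleton.elim _ _

end PermAut

section Asymmetric

/-- A triangle `0 1 2` with pendant paths of lengths two at `0` and one at `1`; no asymmetric graph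
has fewer than six vertices. -/
def asymmetricGraph : SimpleGraph (Fin 6) :=
  fromRel fun a b => (a.val, b.val) ∈ [(0, 1), (0, 2), (0, 3), (1, 2), (1, 4), (3, 5)]

instance : DecidableRel asymmetricGraph.Adj := fun a b => by
  unfold asymmetricGraph
  infer_instance

set_option maxRecDepth 10000 in
lemma asymmetricGraph_perm_eq_one : ∀ σ : Equiv.Perm (Fin 6),
    (∀ a b, asymmetricGraph.Adj (σ a) (σ b) ↔ asymmetricGraph.Adj a b) → σ = 1 := by
  decide

instance : Unique (asymmetricGraph ≃g asymmetricGraph) where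
  default := 1
  uniq φ := RelIso.ext fun x =>
    DFunLike.congr_fun (asymmetricGraph_perm_eq_one φ.toEquiv fun _ _ => φ.map_adj_iff) x

lemma asymmetricGraph_ne_top : asymmetricGraph ≠ ⊤ :=
  ne_top_iff_exists_not_adj.2 ⟨4, 5, by decide, by decide⟩

end Asymmetric

theorem exists_ne_top_three_le_card_autMulEquiv {V : Type} [Fintype V] (G : SimpleGraph V) :
    ∃ (W : Type) (_ : Fintype W) (H : SimpleGraph W),
      H ≠ ⊤ ∧ 3 ≤ Fintype.card W ∧ Nonempty ((H ≃g H) ≃* (G ≃g G)) := by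
  rcases le_or_gt (Fintype.card V) 1 with h1 | h2
  · have := Fintype.card_le_one_iff_subsingleton.1 h1
    exact ⟨Fin 6, inferInstance, asymmetricGraph, asymmetricGraph_ne_top, by simp,
      ⟨MulEquiv.ofUnique⟩⟩
  by_cases hG : G ≠ ⊤ ∧ 3 ≤ Fintype.card V
  · exact ⟨V, inferInstance, G, hG.1, hG.2, ⟨MulEquiv.refl _⟩⟩
  have hperm : ∀ (σ : Equiv.Perm V) (a b : V), G.Adj (σ a) (σ b) ↔ G.Adj a b := by
    rcases not_and_or.1 hG with hG | hV
    · simp [not_not.1 hG]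
    · exact adj_perm_iff_of_card_le_two (by omega)
  exact ⟨V ⊕ Unit, inferInstance, completeBipartiteGraph V Unit,
    completeBipartiteGraph_ne_top h2, by simp; omega,
    ⟨(starAutMulEquiv h2).trans (autMulEquivPerm hperm).symm⟩⟩

theorem exists_ne_top_le_card_autMulEquiv {V : Type} [Fintype V] (G : SimpleGraph V) (k : ℕ) :
    ∃ (W : Type) (_ : Fintype W) (H : SimpleGraph W),
      H ≠ ⊤ ∧ 3 ≤ Fintype.card W ∧ k ≤ Fintype.card W ∧
        Nonempty ((H ≃g H) ≃* (G ≃g G)) := by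
  induction k with
  | zero =>
    obtain ⟨W, _, H, hH, h3, he⟩ := exists_ne_top_three_le_card_autMulEquiv G
    exact ⟨W, inferInstance, H, hH, h3, Nat.zero_le _, he⟩
  | succ k ih =>
    obtain ⟨W, _, H, hH, h3, hk, ⟨e⟩⟩ := ih
    exact ⟨W ⊕ W, inferInstance, ext H, ext_ne_top hH, by simp; omega, by simp; omega,
      ⟨(extAutMulEquiv hH h3).trans e⟩⟩

theorem stmt7 {V : Type} [Fintype V] (G : SimpleGraph V) (k : ℕ) :
    ∃ (W : Type) (_ : Fintype W) (H : SimpleGraph W),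
      H.Connected ∧ Nonempty ((H ≃g H) ≃* (G ≃g G)) ∧ k ≤ H.cliqueNum := by
  obtain ⟨W, _, H, hH, h3, hk, ⟨e⟩⟩ := exists_ne_top_le_card_autMulEquiv G k
  have : Nonempty W := Fintype.card_pos_iff.1 (by omega)
  exact ⟨W ⊕ W, inferInstance, ext H, ext_connected, ⟨(extAutMulEquiv hH h3).trans e⟩,
    hk.trans card_le_cliqueNum_ext⟩
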